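/- arXiv:1302.4151 — 3 statements merged into one kernel-verified Lean document; each statement's English description precedes it below -/
import Mathlib

section
/- Let φ : (R,m) → (S,n) be a flat local homomorphism of commutative Noetherian local rings such that the induced map R/m → S/mS is an isomorphism, and let M and N be finitely generated R-modules. Then the tensor product M ⊗_R N has an S-module structure compatible with its R-module structure via φ if and only if for every prime ideal p ∈ Supp_R(M) ∩ Supp_R(N), the induced ring map R/p → S/pS is an isomorphism. -/
universe u

open CategoryTheory TensorProduct

/-- An `R`-module `L` has an `S`-module structure compatible with its `R`-module structure
via `algebraMap R S` if there is an `S`-scalar multiplication making `L` an `S`-module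
such that `algebraMap R S r • x = r • x` for all `r : R`, `x : L`. -/
def HasCompatibleSModule (R S L : Type*) [CommRing R] [CommRing S] [Algebra R S]
    [AddCommGroup L] [Module R L] : Prop :=
  ∃ inst : Module S L, ∀ (r : R) (x : L), (letI := inst; (algebraMap R S r) • x) = r • x

/-!
Write `λ_L : L → S ⊗[R] L` for `x ↦ 1 ⊗ₜ x`. For finitely generated `L`, a compatible `S`-module
structure exists iff `λ_L` is bijective: such a structure yields a multiplication map `μ` with
`μ ∘ λ_L = id`, and since `S = R + 𝔪S` the `S`-module `ker μ` equals `𝔪 • ker μ`, so it vanishes by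
Nakayama over `S`. By Nakayama over `R`, every `R`-submodule of such an `L` is `S`-stable, so
bijectivity of `λ` passes to submodules and quotients; by flatness of `S` it passes to extensions.
A prime filtration then reduces bijectivity of `λ_{M ⊗ N}` to that of `λ_{R ⧸ p}` for
`p ∈ Supp (M ⊗ N) = Supp M ∩ Supp N`, and `λ_{R ⧸ p}` is the map `R ⧸ p → S ⧸ pS`.
-/

variable {R S : Type*} [CommRing R] [CommRing S] [Algebra R S]

theorem hasCompatibleSModule_iff_exists_isScalarTower (L : Type*) [AddCommGroup L] [Module R L] :
    HasCompatibleSModule R S L ↔ ∃ _ : Module S L, IsScalarTower R S L := by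
  refine ⟨fun ⟨_, h⟩ ↦ ⟨_, ⟨fun r s x ↦ ?_⟩⟩, fun ⟨_, _⟩ ↦ ⟨_, algebraMap_smul S⟩⟩
  rw [Algebra.smul_def, mul_smul, h]

theorem bijective_mk_one_congr {X Y : Type*} [AddCommGroup X] [Module R X] [AddCommGroup Y]
    [Module R Y] (e : X ≃ₗ[R] Y) :
    Function.Bijective (TensorProduct.mk R S X 1) ↔
      Function.Bijective (TensorProduct.mk R S Y 1) := by
  have h : ⇑(TensorProduct.mk R S Y 1) = e.lTensor S ∘ TensorProduct.mk R S X 1 ∘ e.symm := by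
    ext; simp
  rw [h, (e.lTensor S).bijective.of_comp_iff', Function.Bijective.of_comp_iff _ e.symm.bijective]

theorem exists_isScalarTower_of_bijective_mk_one {L : Type*} [AddCommGroup L] [Module R L]
    (h : Function.Bijective (TensorProduct.mk R S L 1)) :
    ∃ _ : Module S L, IsScalarTower R S L := by
  let e := LinearEquiv.ofBijective _ h
  let _ : SMul S L := ⟨fun s x ↦ e.symm (s • e x)⟩
  have e_smul (s : S) (x : L) : e (s • x) = s • e x := e.apply_symm_apply _
  let inst : Module S L := e.injective.module S e.toAddMonoidHom e_smul
  refine ⟨inst, ⟨fun r s x ↦ e.injective ?_⟩⟩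
  simp [e_smul]

theorem bijective_mk_one_quotient_iff (p : Ideal R) :
    Function.Bijective (TensorProduct.mk R S (R ⧸ p) 1) ↔
      Function.Bijective
        (Ideal.quotientMap (p.map (algebraMap R S)) (algebraMap R S) Ideal.le_comap_map) := by
  have : ⇑(TensorProduct.mk R S (R ⧸ p) 1) = Algebra.TensorProduct.quotIdealMapEquivTensorQuot S p ∘
      Ideal.quotientMap (p.map (algebraMap R S)) (algebraMap R S) Ideal.le_comap_map := by
    ext x
    obtain ⟨r, rfl⟩ := Ideal.Quotient.mk_surjective x
    rw [Function.comp_apply, Ideal.quotientMap_mk,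
      Algebra.TensorProduct.quotIdealMapEquivTensorQuot_mk, Algebra.algebraMap_eq_smul_one,
      smul_tmul, ← Ideal.Quotient.algebraMap_eq, Algebra.algebraMap_eq_smul_one]
    rfl
  rw [this, EquivLike.comp_bijective]

theorem bijective_mk_one_of_exact [Module.Flat R S] {N₁ N₂ N₃ : Type*}
    [AddCommGroup N₁] [Module R N₁] [AddCommGroup N₂] [Module R N₂]
    [AddCommGroup N₃] [Module R N₃] {f : N₁ →ₗ[R] N₂} {g : N₂ →ₗ[R] N₃}
    (hf : Function.Injective f) (hg : Function.Surjective g) (hfg : Function.Exact f g)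
    (h₁ : Function.Bijective (TensorProduct.mk R S N₁ 1))
    (h₃ : Function.Bijective (TensorProduct.mk R S N₃ 1)) :
    Function.Bijective (TensorProduct.mk R S N₂ 1) :=
  -- the five lemma for `0 → N₁ → N₂ → N₃ → 0` over its base change, exact since `S` is flat
  LinearMap.bijective_of_surjective_of_bijective_of_bijective_of_injective
    (f₁ := (0 : Unit →ₗ[R] N₁)) (f₂ := f) (f₃ := g) (f₄ := (0 : N₃ →ₗ[R] Unit))
    (g₁ := (0 : Unit →ₗ[R] S ⊗[R] N₁)) (g₂ := f.lTensor S) (g₃ := g.lTensor S)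
    (g₄ := (0 : S ⊗[R] N₃ →ₗ[R] Unit)) (i₁ := 0) (i₂ := TensorProduct.mk R S N₁ 1)
    (i₃ := TensorProduct.mk R S N₂ 1) (i₄ := TensorProduct.mk R S N₃ 1) (i₅ := 0)
    (by ext; simp) (by ext; simp) (by ext; simp) (by ext)
    ((LinearMap.exact_zero_iff_injective _ f).mpr hf) hfg
    ((LinearMap.exact_zero_iff_surjective _ g).mpr hg)
    ((LinearMap.exact_zero_iff_injective _ _).mpr
      (Module.Flat.lTensor_preserves_injective_linearMap f hf))
    (lTensor_exact S hfg hg)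
    ((LinearMap.exact_zero_iff_surjective _ _).mpr (LinearMap.lTensor_surjective S hg))
    (fun _ ↦ ⟨(), rfl⟩) h₁ h₃ (fun _ _ _ ↦ rfl)

section Nakayama

variable {I : Ideal R} {L : Type*} [AddCommGroup L] [Module R L]

theorem smul_mem_span_singleton_sup_smul [Module S L] [IsScalarTower R S L]
    (hI : Function.Surjective
      (Ideal.quotientMap (I.map (algebraMap R S)) (algebraMap R S) Ideal.le_comap_map))
    {T : Submodule S L} {y : L} (hy : y ∈ T) (s : S) :
    s • y ∈ (R ∙ y) ⊔ I • T.restrictScalars R := by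
  obtain ⟨x, hx⟩ := hI (Ideal.Quotient.mk _ s)
  obtain ⟨r, rfl⟩ := Ideal.Quotient.mk_surjective x
  rw [Ideal.quotientMap_mk, Ideal.Quotient.eq] at hx
  have hsub : (algebraMap R S r - s) • y ∈ I • T.restrictScalars R := by
    rw [← Ideal.smul_restrictScalars, Submodule.restrictScalars_mem]
    exact Submodule.smul_mem_smul hx hy
  have hsy : s • y = r • y - (algebraMap R S r - s) • y := by
    rw [sub_smul, algebraMap_smul, sub_sub_cancel]
  rw [hsy]
  exact Submodule.sub_mem _ (Submodule.mem_sup_left (Submodule.mem_span_singleton.mpr ⟨r, rfl⟩))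
    (Submodule.mem_sup_right hsub)

theorem range_mk_one_sup_smul_top
    (hI : Function.Surjective
      (Ideal.quotientMap (I.map (algebraMap R S)) (algebraMap R S) Ideal.le_comap_map)) :
    LinearMap.range (TensorProduct.mk R S L 1) ⊔ I • ⊤ = ⊤ := by
  rw [eq_top_iff]
  rintro z -
  induction z with
  | zero => exact Submodule.zero_mem _
  | add x y hx hy => exact Submodule.add_mem _ hx hy
  | tmul s x =>
    have hsx := smul_mem_span_singleton_sup_smul hI (Submodule.mem_top (x := (1 : S) ⊗ₜ[R] x)) s
    rw [smul_tmul', smul_eq_mul, mul_one] at hsx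
    have hle : (R ∙ (1 : S) ⊗ₜ[R] x) ≤ LinearMap.range (TensorProduct.mk R S L 1) :=
      (Submodule.span_singleton_le_iff_mem _ _).mpr (LinearMap.mem_range_self _ x)
    exact sup_le_sup_right hle _ hsx

theorem restrictScalars_span_eq [IsNoetherianRing R] [Module.Finite R L] [Module S L]
    [IsScalarTower R S L]
    (hI : Function.Surjective
      (Ideal.quotientMap (I.map (algebraMap R S)) (algebraMap R S) Ideal.le_comap_map))
    (hIR : I ≤ Ideal.jacobson ⊥) (A : Submodule R L) :
    (Submodule.span S (A : Set L)).restrictScalars R = A := by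
  refine le_antisymm (Submodule.le_of_le_smul_of_le_jacobson_bot
    (IsNoetherian.noetherian _) hIR fun z hz ↦ ?_) (Submodule.subset_span (R := S))
  induction hz using Submodule.span_induction with
  | mem x hx => exact Submodule.mem_sup_left hx
  | zero => exact Submodule.zero_mem _
  | add x y _ _ hx hy => exact Submodule.add_mem _ hx hy
  | smul s y hy hy' =>
    exact sup_le (Submodule.span_singleton_le_iff_mem _ _ |>.mpr hy') le_sup_right
      (smul_mem_span_singleton_sup_smul hI hy s)

theorem bijective_mk_one_of_isScalarTower [IsNoetherianRing S] [Module.Finite R L] [Module S L]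
    [IsScalarTower R S L]
    (hI : Function.Surjective
      (Ideal.quotientMap (I.map (algebraMap R S)) (algebraMap R S) Ideal.le_comap_map))
    (hIS : I.map (algebraMap R S) ≤ Ideal.jacobson ⊥) :
    Function.Bijective (TensorProduct.mk R S L 1) := by
  let μ : S ⊗[R] L →ₗ[S] L := LinearMap.liftBaseChange S LinearMap.id
  have hμ (x : L) : μ (1 ⊗ₜ x) = x := by simp [μ]
  let π : S ⊗[R] L →ₗ[R] S ⊗[R] L :=
    LinearMap.id - TensorProduct.mk R S L 1 ∘ₗ μ.restrictScalars R
  have range_π : LinearMap.range π ≤ (LinearMap.ker μ).restrictScalars R := by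
    rintro _ ⟨z, rfl⟩
    simp [π, hμ]
  have π_comp_mk : π ∘ₗ TensorProduct.mk R S L 1 = 0 := by ext; simp [π, hμ]
  have ker_le : LinearMap.ker μ ≤ I.map (algebraMap R S) • LinearMap.ker μ := by
    intro z hz
    rw [← Submodule.restrictScalars_mem R, Ideal.smul_restrictScalars]
    have hπz : π z = z := by simp [π, LinearMap.mem_ker.mp hz]
    have := Submodule.mem_map_of_mem (f := π)
      ((range_mk_one_sup_smul_top hI).ge (Submodule.mem_top (x := z)))
    rw [Submodule.map_sup, Submodule.map_smul'', ← LinearMap.range_comp, π_comp_mk,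
      LinearMap.range_zero, bot_sup_eq, Submodule.map_top, hπz] at this
    exact smul_mono_right I range_π this
  have ker_eq : LinearMap.ker μ = ⊥ :=
    Submodule.eq_bot_of_le_smul_of_le_jacobson_bot _ _ (IsNoetherian.noetherian _) ker_le hIS
  refine ⟨Function.LeftInverse.injective (g := μ) hμ, fun z ↦ ⟨μ z, ?_⟩⟩
  have : π z ∈ LinearMap.ker μ := range_π ⟨z, rfl⟩
  rw [ker_eq, Submodule.mem_bot] at this
  exact (sub_eq_zero.mp this).symm

end Nakayama

section Closure

variable {I : Ideal R} {L N : Type*} [AddCommGroup L] [Module R L] [AddCommGroup N] [Module R N]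

theorem bijective_mk_one_iff_hasCompatibleSModule [IsNoetherianRing S] [Module.Finite R L]
    (hI : Function.Surjective
      (Ideal.quotientMap (I.map (algebraMap R S)) (algebraMap R S) Ideal.le_comap_map))
    (hIS : I.map (algebraMap R S) ≤ Ideal.jacobson ⊥) :
    Function.Bijective (TensorProduct.mk R S L 1) ↔ HasCompatibleSModule R S L := by
  rw [hasCompatibleSModule_iff_exists_isScalarTower]
  exact ⟨exists_isScalarTower_of_bijective_mk_one,
    fun ⟨_, _⟩ ↦ bijective_mk_one_of_isScalarTower hI hIS⟩

theorem bijective_mk_one_of_injective [IsNoetherianRing R] [IsNoetherianRing S]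
    [Module.Finite R L]
    (hI : Function.Surjective
      (Ideal.quotientMap (I.map (algebraMap R S)) (algebraMap R S) Ideal.le_comap_map))
    (hIR : I ≤ Ideal.jacobson ⊥) (hIS : I.map (algebraMap R S) ≤ Ideal.jacobson ⊥)
    (hL : Function.Bijective (TensorProduct.mk R S L 1)) {f : N →ₗ[R] L}
    (hf : Function.Injective f) : Function.Bijective (TensorProduct.mk R S N 1) := by
  obtain ⟨_, _⟩ := exists_isScalarTower_of_bijective_mk_one hL
  have hT := restrictScalars_span_eq hI hIR (LinearMap.range f)
  rw [bijective_mk_one_congr (LinearEquiv.ofInjective f hf ≪≫ₗ LinearEquiv.ofEq _ _ hT.symm)]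
  exact bijective_mk_one_of_isScalarTower hI hIS

theorem bijective_mk_one_of_surjective [IsNoetherianRing R] [IsNoetherianRing S]
    [Module.Finite R L]
    (hI : Function.Surjective
      (Ideal.quotientMap (I.map (algebraMap R S)) (algebraMap R S) Ideal.le_comap_map))
    (hIR : I ≤ Ideal.jacobson ⊥) (hIS : I.map (algebraMap R S) ≤ Ideal.jacobson ⊥)
    (hL : Function.Bijective (TensorProduct.mk R S L 1)) {g : L →ₗ[R] N}
    (hg : Function.Surjective g) : Function.Bijective (TensorProduct.mk R S N 1) := by
  obtain ⟨_, _⟩ := exists_isScalarTower_of_bijective_mk_one hL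
  let T := Submodule.span S (LinearMap.ker g : Set L)
  have hT : T.restrictScalars R = LinearMap.ker g := restrictScalars_span_eq hI hIR _
  have : Module.Finite R (L ⧸ T) :=
    Module.Finite.of_surjective (T.mkQ.restrictScalars R) T.mkQ_surjective
  rw [bijective_mk_one_congr ((g.quotKerEquivOfSurjective hg).symm ≪≫ₗ
    Submodule.quotEquivOfEq _ _ hT.symm ≪≫ₗ Submodule.Quotient.restrictScalarsEquiv R T)]
  exact bijective_mk_one_of_isScalarTower hI hIS

end Closure

theorem Module.support_tensorProduct {M N : Type*} [AddCommGroup M] [Module R M] [AddCommGroup N]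
    [Module R N] [Module.Finite R M] [Module.Finite R N] :
    Module.support R (M ⊗[R] N) = Module.support R M ∩ Module.support R N := by
  ext p
  simp only [Set.mem_inter_iff, Module.mem_support_iff_nontrivial_residueField_tensorProduct]
  rw [(AlgebraTensorModule.distribBaseChange R p.asIdeal.ResidueField M N).nontrivial_congr]
  refine ⟨fun h ↦ ⟨?_, ?_⟩, fun ⟨_, _⟩ ↦ ?_⟩
  · exact not_subsingleton_iff_nontrivial.mp fun _ ↦ not_nontrivial _ h
  · exact not_subsingleton_iff_nontrivial.mp fun _ ↦ not_nontrivial _ h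
  · exact (Module.FaithfullyFlat.nontrivial_tensorProduct_iff_left _ _).mpr ‹_›

theorem bijective_mk_one_iff_forall_mem_support [IsNoetherianRing R] [IsNoetherianRing S]
    [Module.Flat R S] {I : Ideal R}
    (hI : Function.Surjective
      (Ideal.quotientMap (I.map (algebraMap R S)) (algebraMap R S) Ideal.le_comap_map))
    (hIR : I ≤ Ideal.jacobson ⊥) (hIS : I.map (algebraMap R S) ≤ Ideal.jacobson ⊥)
    {L : Type*} [AddCommGroup L] [Module R L] [Module.Finite R L] :
    Function.Bijective (TensorProduct.mk R S L 1) ↔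
      ∀ p ∈ Module.support R L, Function.Bijective (TensorProduct.mk R S (R ⧸ p.asIdeal) 1) := by
  refine ⟨fun hL p hp ↦ ?_, fun h ↦ ?_⟩
  · obtain ⟨x, hx⟩ := Module.mem_support_iff_exists_annihilator.mp hp
    rw [Ideal.annihilator_span_singleton_eq_torsionOf] at hx
    let e := Ideal.quotTorsionOfEquivSpanSingleton R L x
    have hf : Function.Injective ((R ∙ x).subtype ∘ₗ e.toLinearMap) :=
      (Submodule.injective_subtype _).comp e.injective
    exact bijective_mk_one_of_surjective hI hIR hIS
      (bijective_mk_one_of_injective hI hIR hIS hL hf) (Submodule.factor_surjective hx)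
  · refine IsNoetherianRing.induction_on_isQuotientEquivQuotientPrime R ‹_›
      (motive := fun N _ _ _ ↦ Module.support R N ⊆ Module.support R L →
        Function.Bijective (TensorProduct.mk R S N 1)) ?_ ?_ ?_ subset_rfl
    · intro N _ _ _ _ _
      exact ⟨fun _ _ _ ↦ Subsingleton.elim _ _, fun _ ↦ ⟨0, Subsingleton.elim _ _⟩⟩
    · intro N _ _ _ p e hN
      have hp : p ∈ Module.support R N := by
        rw [e.support_eq, Module.mem_support_iff_of_finite, Ideal.annihilator_quotient]
      exact (bijective_mk_one_congr e).mpr (h p (hN hp))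
    · intro N₁ _ _ _ N₂ _ _ _ N₃ _ _ _ f g hf hg hfg h₁ h₃ hN₂
      exact bijective_mk_one_of_exact hf hg hfg
        (h₁ ((Module.support_subset_of_injective f hf).trans hN₂))
        (h₃ ((Module.support_subset_of_surjective g hg).trans hN₂))

/-- Let `φ : (R, m) → (S, n)` be a flat local homomorphism of commutative Noetherian local
rings such that `R/m → S/mS` is an isomorphism, and let `M`, `N` be finitely generated
`R`-modules. Then `M ⊗_R N` has a compatible `S`-module structure iff for every prime
`p ∈ Supp_R M ∩ Supp_R N` the induced map `R/p → S/pS` is an isomorphism. -/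
theorem hasCompatibleSModule_tensorProduct_iff
    (R S : Type u) [CommRing R] [CommRing S] [IsLocalRing R] [IsLocalRing S]
    [IsNoetherianRing R] [IsNoetherianRing S] [Algebra R S] [Module.Flat R S]
    [IsLocalHom (algebraMap R S)]
    (hres : Function.Bijective
      (Ideal.quotientMap ((IsLocalRing.maximalIdeal R).map (algebraMap R S)) (algebraMap R S)
        Ideal.le_comap_map))
    (M N : Type u) [AddCommGroup M] [Module R M] [Module.Finite R M]
    [AddCommGroup N] [Module R N] [Module.Finite R N] :
    HasCompatibleSModule R S (M ⊗[R] N) ↔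
      ∀ p : PrimeSpectrum R, p ∈ Module.support R M ∩ Module.support R N →
        Function.Bijective
          (Ideal.quotientMap (p.asIdeal.map (algebraMap R S)) (algebraMap R S)
            Ideal.le_comap_map) := by
  have hR : IsLocalRing.maximalIdeal R ≤ Ideal.jacobson ⊥ :=
    (IsLocalRing.jacobson_eq_maximalIdeal ⊥ bot_ne_top).ge
  have hS : (IsLocalRing.maximalIdeal R).map (algebraMap R S) ≤ Ideal.jacobson ⊥ :=
    (IsLocalRing.map_maximalIdeal_le _).trans (IsLocalRing.jacobson_eq_maximalIdeal ⊥ bot_ne_top).ge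
  rw [← bijective_mk_one_iff_hasCompatibleSModule hres.2 hS,
    bijective_mk_one_iff_forall_mem_support hres.2 hR hS, Module.support_tensorProduct]
  simp only [bijective_mk_one_quotient_iff]
end

section
/- Let φ : (R,m) → (S,n) be a flat local homomorphism of commutative Noetherian local rings such that the induced map R/m → S/mS is an isomorphism, and let M and N be finitely generated R-modules. If for every minimal element p of the set Supp_R(M) ∩ Supp_R(N) (ordered by inclusion) the induced ring map R/p → S/pS is an isomorphism, then for every prime ideal p ∈ Supp_R(M) ∩ Supp_R(N) the induced ring map R/p → S/pS is an isomorphism. -/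
/-!
Bijectivity of `R ⧸ q → S ⧸ qS` passes from `q` to every ideal `p ⊇ q`, since `R ⧸ p → S ⧸ pS` is
the quotient of that map by `p ⧸ q` and its image `pS ⧸ qS`. As `Supp M ∩ Supp N` is the closed
set `V(ann M + ann N)`, every point of it lies above a minimal one.
-/

universe u

namespace Ideal

variable {R S : Type*} [CommRing R] [CommRing S] (φ : R →+* S) {q p : Ideal R}

lemma quotientMap_map_surjective_of_le (hqp : q ≤ p)
    (hq : Function.Surjective (quotientMap (q.map φ) φ le_comap_map)) :
    Function.Surjective (quotientMap (p.map φ) φ le_comap_map) := by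
  intro s
  obtain ⟨t, rfl⟩ := Quotient.mk_surjective s
  obtain ⟨a, ha⟩ := hq (Quotient.mk (q.map φ) t)
  obtain ⟨r, rfl⟩ := Quotient.mk_surjective a
  rw [quotientMap_mk, Quotient.eq] at ha
  refine ⟨Quotient.mk p r, ?_⟩
  rw [quotientMap_mk, Quotient.eq]
  exact map_mono hqp ha

lemma comap_map_eq_of_quotientMap_map_bijective (hqp : q ≤ p)
    (hq : Function.Bijective (quotientMap (q.map φ) φ le_comap_map)) :
    (p.map φ).comap φ = p := by
  set f := quotientMap (q.map φ) φ le_comap_map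
  refine le_antisymm (fun r hr ↦ ?_) le_comap_map
  have hmap : (p.map φ).map (Quotient.mk (q.map φ)) = (p.map (Quotient.mk q)).map f := by
    rw [map_map, map_map, quotientMap_comp_mk]
  have hfr : f (Quotient.mk q r) ∈ (p.map (Quotient.mk q)).map f := by
    rw [quotientMap_mk, ← hmap]
    exact mem_map_of_mem _ hr
  exact (mem_quotient_iff_mem hqp).mp ((comap_map_of_bijective f hq).le hfr)

lemma quotientMap_map_bijective_of_le (hqp : q ≤ p)
    (hq : Function.Bijective (quotientMap (q.map φ) φ le_comap_map)) :
    Function.Bijective (quotientMap (p.map φ) φ le_comap_map) :=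
  ⟨quotientMap_injective' (comap_map_eq_of_quotientMap_map_bijective φ hqp hq).le,
    quotientMap_map_surjective_of_le φ hqp hq.2⟩

end Ideal

lemma PrimeSpectrum.exists_minimal_mem_zeroLocus_le {R : Type*} [CommRing R] {I : Ideal R}
    {p : PrimeSpectrum R} (hp : p ∈ zeroLocus (I : Set R)) :
    ∃ q, Minimal (· ∈ zeroLocus (I : Set R)) q ∧ q ≤ p := by
  obtain ⟨q, hq, hqp⟩ := Ideal.exists_minimalPrimes_le ((mem_zeroLocus _ _).mp hp)
  refine ⟨⟨q, hq.1.1⟩, ⟨hq.1.2, fun y hy hyq ↦ ?_⟩, hqp⟩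
  exact hq.2 ⟨y.isPrime, (mem_zeroLocus _ _).mp hy⟩ hyq

lemma Module.support_inter_support_eq_zeroLocus (R M N : Type*) [CommRing R]
    [AddCommGroup M] [Module R M] [Module.Finite R M]
    [AddCommGroup N] [Module R N] [Module.Finite R N] :
    support R M ∩ support R N =
      PrimeSpectrum.zeroLocus ((annihilator R M ⊔ annihilator R N : Ideal R) : Set R) := by
  rw [support_eq_zeroLocus, support_eq_zeroLocus, ← PrimeSpectrum.zeroLocus_sup]

theorem support_bijective_of_minimal_bijective_general
    (R S : Type u) [CommRing R] [CommRing S] [Algebra R S]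
    (M N : Type u) [AddCommGroup M] [Module R M] [Module.Finite R M]
    [AddCommGroup N] [Module R N] [Module.Finite R N]
    (h : ∀ p : PrimeSpectrum R, Minimal (· ∈ Module.support R M ∩ Module.support R N) p →
      Function.Bijective
        (Ideal.quotientMap (p.asIdeal.map (algebraMap R S)) (algebraMap R S)
          Ideal.le_comap_map)) :
    ∀ p : PrimeSpectrum R, p ∈ Module.support R M ∩ Module.support R N →
      Function.Bijective
        (Ideal.quotientMap (p.asIdeal.map (algebraMap R S)) (algebraMap R S)
          Ideal.le_comap_map) := by
  intro p hp
  rw [Module.support_inter_support_eq_zeroLocus] at h hp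
  obtain ⟨q, hq, hqp⟩ := PrimeSpectrum.exists_minimal_mem_zeroLocus_le hp
  exact Ideal.quotientMap_map_bijective_of_le _ hqp (h q hq)

/-- Let `φ : (R, m) → (S, n)` be a flat local homomorphism of commutative Noetherian local
rings such that `R/m → S/mS` is an isomorphism, and let `M`, `N` be finitely generated
`R`-modules. If `R/p → S/pS` is an isomorphism for every minimal element `p` of
`Supp_R M ∩ Supp_R N`, then `R/p → S/pS` is an isomorphism for every
`p ∈ Supp_R M ∩ Supp_R N`. -/
theorem support_bijective_of_minimal_bijective
    (R S : Type u) [CommRing R] [CommRing S] [IsLocalRing R] [IsLocalRing S]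
    [IsNoetherianRing R] [IsNoetherianRing S] [Algebra R S] [Module.Flat R S]
    [IsLocalHom (algebraMap R S)]
    (hres : Function.Bijective
      (Ideal.quotientMap ((IsLocalRing.maximalIdeal R).map (algebraMap R S)) (algebraMap R S)
        Ideal.le_comap_map))
    (M N : Type u) [AddCommGroup M] [Module R M] [Module.Finite R M]
    [AddCommGroup N] [Module R N] [Module.Finite R N]
    (h : ∀ p : PrimeSpectrum R, Minimal (· ∈ Module.support R M ∩ Module.support R N) p →
      Function.Bijective
        (Ideal.quotientMap (p.asIdeal.map (algebraMap R S)) (algebraMap R S)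
          Ideal.le_comap_map)) :
    ∀ p : PrimeSpectrum R, p ∈ Module.support R M ∩ Module.support R N →
      Function.Bijective
        (Ideal.quotientMap (p.asIdeal.map (algebraMap R S)) (algebraMap R S)
          Ideal.le_comap_map) :=
  support_bijective_of_minimal_bijective_general R S M N h
end

section
/- Let φ : (R,m) → (S,n) be a flat local homomorphism of commutative Noetherian local rings such that the induced map R/m → S/mS is an isomorphism, and let M and N be finitely generated R-modules. Then Hom_R(S ⊗_R M, N) ≅ Hom_R(S, Hom_R(M,N)) as R-modules, and this module is finitely generated over R. -/
universe u

open TensorProduct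

/-! Surjectivity of `R/m → S/mS` says `S = φ(R) + mS`, which makes `g ↦ g 1` injective on
`Hom_R(S, P)` for every finitely generated `P`: the image of a `g` vanishing at `1` equals `m` times
itself, so it is zero by Nakayama. Hence `Hom_R(S ⊗_R M, N) ≅ Hom_R(S, Hom_R(M, N))` embeds into
the finitely generated `Hom_R(M, N)`. -/

theorem Submodule.sup_smul_top_eq_top_of_surjective_quotientMap {R S : Type*} [CommRing R]
    [CommRing S] [Algebra R S] (I : Ideal R)
    (h : Function.Surjective
      (Ideal.quotientMap (I.map (algebraMap R S)) (algebraMap R S) Ideal.le_comap_map)) :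
    LinearMap.range (Algebra.linearMap R S) ⊔ I • ⊤ = ⊤ := by
  refine eq_top_iff.mpr fun s _ => ?_
  obtain ⟨x, hx⟩ := h (Ideal.Quotient.mk _ s)
  obtain ⟨r, rfl⟩ := Ideal.Quotient.mk_surjective x
  rw [Ideal.quotientMap_mk] at hx
  have hdiff : s - algebraMap R S r ∈ I • (⊤ : Submodule R S) := by
    rw [Ideal.smul_top_eq_map]
    exact Ideal.Quotient.eq.mp hx.symm
  simpa using Submodule.add_mem_sup (LinearMap.mem_range_self (Algebra.linearMap R S) r) hdiff

theorem LinearMap.eq_zero_of_sup_smul_top_eq_top {R S P : Type*} [CommRing R]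
    [AddCommGroup S] [Module R S] [AddCommGroup P] [Module R P] [IsNoetherian R P]
    {I : Ideal R} (hI : I ≤ (⊥ : Ideal R).jacobson) {S₀ : Submodule R S}
    (hS₀ : S₀ ⊔ I • ⊤ = ⊤) {g : S →ₗ[R] P} (hg : S₀ ≤ LinearMap.ker g) : g = 0 := by
  have hrange : LinearMap.range g ≤ I • LinearMap.range g := by
    conv_lhs => rw [← Submodule.map_top, ← hS₀, Submodule.map_sup, Submodule.map_smul'',
      LinearMap.le_ker_iff_map.mp hg, bot_sup_eq, Submodule.map_top]
  exact LinearMap.range_eq_bot.mp <| Submodule.eq_bot_of_le_smul_of_le_jacobson_bot I _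
    (IsNoetherian.noetherian _) hrange hI

theorem LinearMap.injective_applyₗ_one_of_sup_smul_top_eq_top {R S P : Type*} [CommRing R]
    [Ring S] [Algebra R S] [AddCommGroup P] [Module R P] [IsNoetherian R P]
    {I : Ideal R} (hI : I ≤ (⊥ : Ideal R).jacobson)
    (hS : LinearMap.range (Algebra.linearMap R S) ⊔ I • ⊤ = ⊤) :
    Function.Injective (LinearMap.applyₗ (R := R) (M₂ := P) (1 : S)) := by
  refine (injective_iff_map_eq_zero _).mpr fun g hg => eq_zero_of_sup_smul_top_eq_top hI hS ?_
  rintro _ ⟨r, rfl⟩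
  simp_all [Algebra.algebraMap_eq_smul_one]

theorem hom_baseChange_iso_and_finite_general
    (R S : Type u) [CommRing R] [CommRing S] [IsLocalRing R]
    [IsNoetherianRing R] [Algebra R S]
    (hres : Function.Bijective
      (Ideal.quotientMap ((IsLocalRing.maximalIdeal R).map (algebraMap R S)) (algebraMap R S)
        Ideal.le_comap_map))
    (M N : Type u) [AddCommGroup M] [Module R M] [Module.Finite R M]
    [AddCommGroup N] [Module R N] [Module.Finite R N] :
    Nonempty (((S ⊗[R] M) →ₗ[R] N) ≃ₗ[R] (S →ₗ[R] (M →ₗ[R] N))) ∧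
      Module.Finite R ((S ⊗[R] M) →ₗ[R] N) := by
  let e := (TensorProduct.lift.equiv (RingHom.id R) S M N).symm
  have hS := Submodule.sup_smul_top_eq_top_of_surjective_quotientMap _ hres.2
  have : Module.Finite R (S →ₗ[R] (M →ₗ[R] N)) := Module.Finite.of_injective _ <|
    LinearMap.injective_applyₗ_one_of_sup_smul_top_eq_top
      (IsLocalRing.maximalIdeal_le_jacobson ⊥) hS
  exact ⟨⟨e⟩, Module.Finite.equiv e.symm⟩

/-- Let `φ : (R, m) → (S, n)` be a flat local homomorphism of commutative Noetherian local
rings such that `R/m → S/mS` is an isomorphism, and let `M`, `N` be finitely generated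
`R`-modules. Then `Hom_R(S ⊗_R M, N) ≅ Hom_R(S, Hom_R(M, N))` as `R`-modules, and this
module is finitely generated over `R`. -/
theorem hom_baseChange_iso_and_finite
    (R S : Type u) [CommRing R] [CommRing S] [IsLocalRing R] [IsLocalRing S]
    [IsNoetherianRing R] [IsNoetherianRing S] [Algebra R S] [Module.Flat R S]
    [IsLocalHom (algebraMap R S)]
    (hres : Function.Bijective
      (Ideal.quotientMap ((IsLocalRing.maximalIdeal R).map (algebraMap R S)) (algebraMap R S)
        Ideal.le_comap_map))
    (M N : Type u) [AddCommGroup M] [Module R M] [Module.Finite R M]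
    [AddCommGroup N] [Module R N] [Module.Finite R N] :
    Nonempty (((S ⊗[R] M) →ₗ[R] N) ≃ₗ[R] (S →ₗ[R] (M →ₗ[R] N))) ∧
      Module.Finite R ((S ⊗[R] M) →ₗ[R] N) :=
  hom_baseChange_iso_and_finite_general R S hres M N
end
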